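/- Assume 2K ≥ n where n = |V|, and let ℓ, ℓ' ∈ Rep. Then ℓ' is a predecessor of ℓ (i.e., ℓ' ≤ ℓ pointwise, ℓ' ≠ ℓ, and there is no ℓ'' ∈ Rep with ℓ' ≤ ℓ'' ≤ ℓ pointwise and ℓ'' distinct from both ℓ' and ℓ) if and only if ℓ' is obtained from ℓ by one left-shifting operation, i.e., there is a vertex v with ℓ'(v) = ℓ(v) − ε and ℓ'(u) = ℓ(u) for all u ≠ v. -/

import Mathlib

/-- A unit interval representation of `G`: distinct vertices are adjacent iff their
points are at distance at most `1`. -/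
def IsUIRep {V : Type*} (G : SimpleGraph V) (ℓ : V → ℝ) : Prop :=
  ∀ u v : V, u ≠ v → (G.Adj u v ↔ |ℓ u - ℓ v| ≤ 1)

/-- Two vertices are indistinguishable if they have the same closed neighborhood. -/
def Indist {V : Type*} (G : SimpleGraph V) (u v : V) : Prop :=
  ∀ w : V, (w = u ∨ G.Adj u w) ↔ (w = v ∨ G.Adj v w)

/-- `GridRep G lt K lbound ℓ`: `ℓ` belongs to `Rep(G, <, ε, lbound)` for `ε = 1/K`,
i.e. it is an `ε`-grid unit interval representation of `G` whose left-to-right order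
extends `lt` and which satisfies the lower bounds. -/
def GridRep {V : Type*} (G : SimpleGraph V) (lt : V → V → Prop) (K : ℕ) (lbound : V → ℝ)
    (ℓ : V → ℝ) : Prop :=
  IsUIRep G ℓ ∧ (∀ v : V, ∃ m : ℤ, ℓ v = m * (1 / (K : ℝ))) ∧
    (∀ u v : V, lt u v → ℓ u ≤ ℓ v) ∧ (∀ v : V, lbound v ≤ ℓ v)

/-!
Moving one vertex `u` a grid step `ε = 1 / K` to the left keeps a representation in `Rep` unless
`u` is blocked: by a neighbour at `ℓ u + 1`, by a non-neighbour at `ℓ u - (1 + ε)`, or by some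
`a < u` with `ℓ a = ℓ u`. Suppose `ℓ' < ℓ` in `Rep` and let `D = {v | ℓ' v < ℓ v}`. Among the
vertices of `D` at a given position, a `<`-minimal one is not blocked by a smaller vertex, and a
neighbour or non-neighbour blocking it lies in `D` again. The offsets `+1` and `-(1 + ε)` agree
modulo `2 + ε`, and `1` has order `2K + 1` in `ℝ ⧸ (2 + ε)ℤ`; so if every vertex of `D` were
blocked, the positions of `D` would meet `2K + 1 > |V|` classes. Hence some `u ∈ D` can be shifted,
and the shifted representation lies between `ℓ'` and `ℓ`, so it equals `ℓ'` when `ℓ'` is a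
predecessor. Conversely, on the grid nothing lies strictly between `ℓ` and a one-step shift of it.
-/

open AddSubgroup Function

section Grid

variable {ε x y : ℝ}

lemma mem_zmultiples_iff_exists_eq_int_mul : x ∈ zmultiples ε ↔ ∃ m : ℤ, x = m * ε := by
  simp only [mem_zmultiples_iff, zsmul_eq_mul, eq_comm]

lemma add_le_of_lt_of_mem_zmultiples (hε : 0 < ε) (hx : x ∈ zmultiples ε)
    (hy : y ∈ zmultiples ε) (hxy : x < y) : x + ε ≤ y := by
  obtain ⟨k, hk⟩ := mem_zmultiples_iff_exists_eq_int_mul.mp (sub_mem hy hx)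
  have hk0 : (0 : ℝ) < k := pos_of_mul_pos_left (hk ▸ sub_pos.mpr hxy) hε.le
  have hk1 : (1 : ℝ) ≤ k := by exact_mod_cast Int.cast_pos.mp hk0
  nlinarith

lemma one_mem_zmultiples_one_div {K : ℕ} (hK : K ≠ 0) : (1 : ℝ) ∈ zmultiples (1 / (K : ℝ)) :=
  mem_zmultiples_iff_exists_eq_int_mul.mpr ⟨K, by rw [Int.cast_natCast]; field_simp⟩

end Grid

section Shift

variable {V : Type*} [DecidableEq V] {ε : ℝ} {ℓ ℓ' : V → ℝ} {u : V}

lemma update_sub_lt_self (hε : 0 < ε) : update ℓ u (ℓ u - ε) < ℓ :=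
  lt_of_le_of_ne (update_le_self_iff.mpr (by linarith))
    (by simpa [update_eq_self_iff] using hε.ne')

lemma le_update_sub_of_lt (hε : 0 < ε) (hgrid : ℓ u ∈ zmultiples ε)
    (hgrid' : ℓ' u ∈ zmultiples ε) (hle : ℓ' ≤ ℓ) (hu : ℓ' u < ℓ u) :
    ℓ' ≤ update ℓ u (ℓ u - ε) := by
  intro v
  rcases eq_or_ne v u with rfl | hv
  · have := add_le_of_lt_of_mem_zmultiples hε hgrid' hgrid hu
    rw [update_self]
    linarith
  · rw [update_of_ne hv]
    exact hle v

lemma eq_update_sub_or_eq_of_le_of_le (hε : 0 < ε) (hgrid : ℓ u ∈ zmultiples ε)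
    (hgrid' : ℓ' u ∈ zmultiples ε) (hlo : update ℓ u (ℓ u - ε) ≤ ℓ') (hhi : ℓ' ≤ ℓ) :
    ℓ' = update ℓ u (ℓ u - ε) ∨ ℓ' = ℓ := by
  have hoff : ∀ v, v ≠ u → ℓ' v = ℓ v := fun v hv =>
    le_antisymm (hhi v) (by simpa [update_of_ne hv] using hlo v)
  have hu : ℓ u - ε ≤ ℓ' u := by simpa using hlo u
  rcases (hhi u).eq_or_lt with heq | hlt
  · right
    funext v
    rcases eq_or_ne v u with rfl | hv
    exacts [heq, hoff v hv]
  · left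
    have := add_le_of_lt_of_mem_zmultiples hε hgrid' hgrid hlt
    exact eq_update_iff.mpr ⟨by linarith, hoff⟩

end Shift

lemma addOrderOf_le_card_of_add_mem {A : Type*} [AddLeftCancelMonoid A] {s : Finset A} {g : A}
    (hs : s.Nonempty) (h : ∀ x ∈ s, x + g ∈ s) : addOrderOf g ≤ s.card := by
  obtain ⟨r, hr⟩ := hs
  have hmem : ∀ n : ℕ, r + n • g ∈ s := by
    intro n
    induction n with
    | zero => simpa using hr
    | succ n ih => simpa [succ_nsmul, ← add_assoc] using h _ ih
  exact Finset.le_card_of_inj_on_range (fun n => r + n • g) (fun n _ => hmem n)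
    fun i hi j hj hij => nsmul_injOn_Iio_addOrderOf hi hj (add_left_cancel hij)

lemma addOrderOf_coe_one_addCircle {K : ℕ} (hK : K ≠ 0) :
    addOrderOf ((1 : ℝ) : AddCircle (2 + 1 / (K : ℝ))) = 2 * K + 1 := by
  have : Fact (0 < 2 + 1 / (K : ℝ)) := ⟨by positivity⟩
  have hone : ((1 : ℝ) : AddCircle (2 + 1 / (K : ℝ))) =
      (((K : ℕ) / ((2 * K + 1 : ℕ) : ℝ) * (2 + 1 / (K : ℝ)) : ℝ) : AddCircle _) := by
    have : (K : ℝ) ≠ 0 := by exact_mod_cast hK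
    congr 1
    push_cast
    field_simp
  rw [hone, AddCircle.addOrderOf_div_of_gcd_eq_one (Nat.succ_pos _)]
  simp

section Representations

variable {V : Type*} {G : SimpleGraph V} {lt : V → V → Prop} {K : ℕ} {lbound : V → ℝ}
  {ℓ ℓ' : V → ℝ}

lemma not_indist_of_not_adj {u v : V} (hne : u ≠ v) (hadj : ¬ G.Adj u v) : ¬ Indist G u v :=
  fun h => ((h u).mp (Or.inl rfl)).elim hne fun h' => hadj h'.symm

lemma IsUIRep.update [DecidableEq V] (h : IsUIRep G ℓ) {u : V} {x : ℝ}
    (hu : ∀ w, w ≠ u → (G.Adj u w ↔ |x - ℓ w| ≤ 1)) : IsUIRep G (Function.update ℓ u x) := by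
  intro a b hab
  rcases eq_or_ne a u with rfl | ha
  · rw [update_self, update_of_ne hab.symm]
    exact hu b hab.symm
  rcases eq_or_ne b u with rfl | hb
  · rw [update_self, update_of_ne ha, G.adj_comm, abs_sub_comm]
    exact hu a ha
  · rw [update_of_ne ha, update_of_ne hb]
    exact h a b hab

lemma GridRep.mem_zmultiples (h : GridRep G lt K lbound ℓ) (v : V) :
    ℓ v ∈ zmultiples (1 / (K : ℝ)) :=
  mem_zmultiples_iff_exists_eq_int_mul.mpr (h.2.1 v)

lemma GridRep.update [DecidableEq V] (h : GridRep G lt K lbound ℓ) {u : V} {x : ℝ}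
    (hadj : ∀ w, w ≠ u → (G.Adj u w ↔ |x - ℓ w| ≤ 1)) (hx : x ∈ zmultiples (1 / (K : ℝ)))
    (hlt : ∀ a, a ≠ u → lt a u → ℓ a ≤ x) (hxu : x ≤ ℓ u) (hlb : lbound u ≤ x) :
    GridRep G lt K lbound (Function.update ℓ u x) := by
  obtain ⟨hUI, hgrid, hord, hlbℓ⟩ := h
  refine ⟨hUI.update hadj, ?_, ?_, ?_⟩
  · intro v
    rcases eq_or_ne v u with rfl | hv
    · simpa using mem_zmultiples_iff_exists_eq_int_mul.mp hx
    · simpa [update_of_ne hv] using hgrid v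
  · intro a b hab
    rcases eq_or_ne a u with rfl | ha
    · rcases eq_or_ne b a with rfl | hb
      · exact le_rfl
      · rw [update_self, update_of_ne hb]
        exact hxu.trans (hord a b hab)
    rcases eq_or_ne b u with rfl | hb
    · rw [update_self, update_of_ne ha]
      exact hlt a ha hab
    · rw [update_of_ne ha, update_of_ne hb]
      exact hord a b hab
  · intro v
    rcases eq_or_ne v u with rfl | hv
    · simpa using hlb
    · simpa [update_of_ne hv] using hlbℓ v

lemma IsUIRep.adj_iff_abs_sub_sub_le (h : IsUIRep G ℓ) {ε : ℝ} (hε : 0 < ε)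
    (hone : (1 : ℝ) ∈ zmultiples ε) (hgrid : ∀ v, ℓ v ∈ zmultiples ε) {u : V}
    (hR : ∀ w, G.Adj u w → ℓ w ≠ ℓ u + 1)
    (hL : ∀ w, w ≠ u → ¬ G.Adj u w → ℓ w ≠ ℓ u - (1 + ε)) {w : V} (hw : w ≠ u) :
    G.Adj u w ↔ |ℓ u - ε - ℓ w| ≤ 1 := by
  have hε1 : ε ≤ 1 := by simpa using add_le_of_lt_of_mem_zmultiples hε (zero_mem _) hone one_pos
  have hstep := fun x y hx hy => add_le_of_lt_of_mem_zmultiples hε (x := x) (y := y) hx hy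
  rw [h u w hw.symm, abs_le, abs_le]
  constructor
  · rintro ⟨hlo, hhi⟩
    refine ⟨?_, by linarith⟩
    rcases le_or_gt (ℓ w) (ℓ u) with hwu | hwu
    · linarith
    · have := hstep _ _ (hgrid w) (add_mem (hgrid u) hone)
        (lt_of_le_of_ne (by linarith) (hR w ((h u w hw.symm).mpr (abs_le.mpr ⟨hlo, hhi⟩))))
      linarith
  · rintro ⟨hlo, hhi⟩
    by_contra hfar
    rw [← abs_le, ← h u w hw.symm] at hfar
    have hgap : ℓ w + 1 + ε ≤ ℓ u := hstep _ _ (add_mem (hgrid w) hone) (hgrid u) (by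
      by_contra! hnear
      exact hfar ((h u w hw.symm).mpr (abs_le.mpr ⟨by linarith, by linarith⟩)))
    have := hstep _ _ (add_mem (add_mem (hgrid w) hone) (mem_zmultiples ε)) (hgrid u)
      (lt_of_le_of_ne hgap fun heq => hL w hw hfar (by linarith))
    linarith

lemma GridRep.update_sub_one_div [DecidableEq V] (h : GridRep G lt K lbound ℓ) (hK : K ≠ 0)
    {u : V} (hR : ∀ w, G.Adj u w → ℓ w ≠ ℓ u + 1)
    (hL : ∀ w, w ≠ u → ¬ G.Adj u w → ℓ w ≠ ℓ u - (1 + 1 / (K : ℝ)))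
    (hO : ∀ a, lt a u → ℓ a ≠ ℓ u) (hlb : lbound u ≤ ℓ u - 1 / K) :
    GridRep G lt K lbound (Function.update ℓ u (ℓ u - 1 / K)) := by
  have hε : (0 : ℝ) < 1 / K := by positivity
  refine h.update
    (fun w hw => h.1.adj_iff_abs_sub_sub_le hε (one_mem_zmultiples_one_div hK) h.mem_zmultiples
      hR hL hw)
    (sub_mem (h.mem_zmultiples u) (AddSubgroup.mem_zmultiples _)) (fun a _ hau => ?_)
    (by linarith) hlb
  have := add_le_of_lt_of_mem_zmultiples hε (h.mem_zmultiples a) (h.mem_zmultiples u)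
    (lt_of_le_of_ne (h.2.2.1 a u hau) (hO a hau))
  linarith

lemma lt_of_adj_of_eq_add_one (h' : IsUIRep G ℓ') {a w : V} (ha : ℓ' a < ℓ a)
    (hadj : G.Adj a w) (hw : ℓ w = ℓ a + 1) : ℓ' w < ℓ w := by
  have := (abs_le.mp ((h' a w hadj.ne).mp hadj)).1
  linarith

lemma lt_of_not_adj_of_eq_sub (hcomp : ∀ u v : V, ¬ Indist G u v → lt u v ∨ lt v u)
    (h : GridRep G lt K lbound ℓ) (h' : GridRep G lt K lbound ℓ') (hK : K ≠ 0) {a w : V}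
    (ha : ℓ' a < ℓ a) (hwa : w ≠ a) (hadj : ¬ G.Adj a w) (hw : ℓ w = ℓ a - (1 + 1 / (K : ℝ))) :
    ℓ' w < ℓ w := by
  have hε : (0 : ℝ) < 1 / K := by positivity
  have hwa_lt : lt w a := by
    refine (hcomp a w (not_indist_of_not_adj hwa.symm hadj)).resolve_left fun haw => ?_
    have := h.2.2.1 a w haw
    linarith
  have hfar : ℓ' w + 1 < ℓ' a := by
    have := h'.2.2.1 w a hwa_lt
    rw [h'.1 a w hwa.symm, abs_le, not_and_or] at hadj
    rcases hadj with hlo | hhi <;> linarith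
  have hgap := add_le_of_lt_of_mem_zmultiples hε
    (add_mem (h'.mem_zmultiples w) (one_mem_zmultiples_one_div hK)) (h'.mem_zmultiples a) hfar
  have hshift := add_le_of_lt_of_mem_zmultiples hε (h'.mem_zmultiples a) (h.mem_zmultiples a) ha
  linarith

lemma GridRep.update_sub_one_div_or_exists [DecidableEq V]
    (hcomp : ∀ u v : V, ¬ Indist G u v → lt u v ∨ lt v u)
    (h : GridRep G lt K lbound ℓ) (h' : GridRep G lt K lbound ℓ') (hK : K ≠ 0) {a : V}
    (ha : ℓ' a < ℓ a) (hmin : ∀ b, lt b a → ℓ b = ℓ a → ¬ ℓ' b < ℓ b) :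
    GridRep G lt K lbound (Function.update ℓ a (ℓ a - 1 / K)) ∨
      ∃ w, ℓ' w < ℓ w ∧ (ℓ w = ℓ a + 1 ∨ ℓ w = ℓ a - (1 + 1 / (K : ℝ))) := by
  refine or_iff_not_imp_right.mpr fun hno => h.update_sub_one_div hK ?_ ?_ ?_ ?_
  · exact fun w hadj hw => hno ⟨w, lt_of_adj_of_eq_add_one h'.1 ha hadj hw, Or.inl hw⟩
  · exact fun w hwa hadj hw =>
      hno ⟨w, lt_of_not_adj_of_eq_sub hcomp h h' hK ha hwa hadj hw, Or.inr hw⟩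
  · intro b hba hb
    exact hmin b hba hb (lt_of_le_of_lt (h'.2.2.1 b a hba) (hb ▸ ha))
  · have := add_le_of_lt_of_mem_zmultiples (by positivity) (h'.mem_zmultiples a)
      (h.mem_zmultiples a) ha
    linarith [h'.2.2.2 a]

theorem exists_gridRep_update_sub_one_div_of_lt [Fintype V] [DecidableEq V]
    (hirr : ∀ v : V, ¬ lt v v) (htrans : ∀ a b c : V, lt a b → lt b c → lt a c)
    (hcomp : ∀ u v : V, ¬ Indist G u v → lt u v ∨ lt v u) (hK : K ≠ 0)
    (h2K : Fintype.card V ≤ 2 * K) (h : GridRep G lt K lbound ℓ)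
    (h' : GridRep G lt K lbound ℓ') (hlt : ℓ' < ℓ) :
    ∃ u, ℓ' u < ℓ u ∧ GridRep G lt K lbound (Function.update ℓ u (ℓ u - 1 / K)) := by
  classical
  by_contra! hblocked
  have : IsTrans V lt := ⟨htrans⟩
  have : Std.Irrefl lt := ⟨hirr⟩
  let D : Finset V := {v | ℓ' v < ℓ v}
  let π : V → AddCircle (2 + 1 / (K : ℝ)) := fun v => (ℓ v : ℝ)
  have hstep : ∀ x ∈ D.image π, x + ((1 : ℝ) : AddCircle _) ∈ D.image π := by
    simp only [Finset.mem_image, Finset.mem_filter, Finset.mem_univ, true_and, D]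
    rintro _ ⟨v, hv, rfl⟩
    obtain ⟨a, ⟨ha, hav⟩, hmin⟩ := (Finite.wellFounded_of_trans_of_irrefl lt).has_min
      {b | ℓ' b < ℓ b ∧ ℓ b = ℓ v} ⟨v, hv, rfl⟩
    obtain ⟨w, hw, hwa⟩ := (h.update_sub_one_div_or_exists hcomp h' hK ha
      fun b hba hb hb' => hmin b ⟨hb', hb.trans hav⟩ hba).resolve_left (hblocked a ha)
    refine ⟨w, hw, ?_⟩
    rcases hwa with hwa | hwa
    · simp [π, hwa, hav]
    · simp only [π, show ℓ w = ℓ v + 1 - (2 + 1 / K) by rw [hwa, hav]; ring,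
        AddCircle.coe_sub, AddCircle.coe_period, sub_zero, AddCircle.coe_add]
  have hcard := addOrderOf_le_card_of_add_mem (s := D.image π) ?_ hstep
  · rw [addOrderOf_coe_one_addCircle hK] at hcard
    have := (Finset.card_image_le (s := D) (f := π)).trans (Finset.card_le_univ D)
    omega
  · obtain ⟨-, v, hv⟩ := Pi.lt_def.mp hlt
    exact ⟨π v, Finset.mem_image_of_mem π (by simpa [D] using hv)⟩

end Representations


/-- for `2K ≥ n`, `ℓ'` is a predecessor of `ℓ` in `Rep` iff `ℓ'` is
obtained from `ℓ` by one left-shifting operation. -/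
theorem stmt9 {V : Type*} [Fintype V] [DecidableEq V] (G : SimpleGraph V)
    (lt : V → V → Prop)
    (hirr : ∀ v : V, ¬ lt v v)
    (htrans : ∀ a b c : V, lt a b → lt b c → lt a c)
    (hcomp : ∀ u v : V, ¬ Indist G u v → lt u v ∨ lt v u)
    (K : ℕ) (hK : 0 < K) (h2K : Fintype.card V ≤ 2 * K) (lbound : V → ℝ)
    (ℓ ℓ' : V → ℝ) (hℓ : GridRep G lt K lbound ℓ) (hℓ' : GridRep G lt K lbound ℓ') :
    ((∀ v : V, ℓ' v ≤ ℓ v) ∧ ℓ' ≠ ℓ ∧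
      ¬ ∃ ℓ'' : V → ℝ, GridRep G lt K lbound ℓ'' ∧ (∀ v : V, ℓ' v ≤ ℓ'' v) ∧
        (∀ v : V, ℓ'' v ≤ ℓ v) ∧ ℓ'' ≠ ℓ' ∧ ℓ'' ≠ ℓ) ↔
      ∃ u : V, ℓ' = Function.update ℓ u (ℓ u - 1 / (K : ℝ)) := by
  have hε : (0 : ℝ) < 1 / K := by positivity
  constructor
  · rintro ⟨hle, hne, hnomid⟩
    obtain ⟨u, hu, hshift⟩ := exists_gridRep_update_sub_one_div_of_lt hirr htrans hcomp hK.ne'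
      h2K hℓ hℓ' (lt_of_le_of_ne (show ℓ' ≤ ℓ from hle) hne)
    refine ⟨u, ?_⟩
    by_contra hne'
    exact hnomid ⟨_, hshift,
      le_update_sub_of_lt hε (hℓ.mem_zmultiples u) (hℓ'.mem_zmultiples u) hle hu,
      (update_sub_lt_self hε).le, Ne.symm hne', (update_sub_lt_self hε).ne⟩
  · rintro ⟨u, rfl⟩
    refine ⟨(update_sub_lt_self hε).le, (update_sub_lt_self hε).ne, ?_⟩
    rintro ⟨ℓ'', hℓ'', hlo, hhi, hne_shift, hne⟩
    exact (eq_update_sub_or_eq_of_le_of_le hε (hℓ.mem_zmultiples u) (hℓ''.mem_zmultiples u)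
      hlo hhi).elim hne_shift hne
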